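/- Let Γ and Δ be maximally EDL-consistent sets and let a be an agent. In the canonical hypergraph model M^c: (i) e_Γ B^{G^c}_a e_Δ if and only if Γ^{B_a} ⊆ Δ; (ii) e_Γ K^{G^c}_a e_Δ if and only if Γ^{K_a} ⊆ Δ. -/

import Mathlib

namespace DoxHG

/-- Formulas of the epistemic-doxastic language `L_KB`. -/
inductive Form (Ag Atom : Type) : Type
  | atom : Atom → Form Ag Atom
  | neg  : Form Ag Atom → Form Ag Atom
  | and  : Form Ag Atom → Form Ag Atom → Form Ag Atom
  | B    : Ag → Form Ag Atom → Form Ag Atom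
  | K    : Ag → Form Ag Atom → Form Ag Atom

namespace Form

variable {Ag Atom : Type}

/-- φ ∨ ψ := ¬(¬φ ∧ ¬ψ) -/
def or (φ ψ : Form Ag Atom) : Form Ag Atom := .neg (.and (.neg φ) (.neg ψ))

/-- φ → ψ := ¬φ ∨ ψ -/
def imp (φ ψ : Form Ag Atom) : Form Ag Atom := Form.or (.neg φ) ψ

/-- φ ↔ ψ -/
def biimp (φ ψ : Form Ag Atom) : Form Ag Atom := .and (φ.imp ψ) (ψ.imp φ)

/-- ⊥ := p ∧ ¬p for an arbitrary but fixed propositional variable p. -/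
def bot [Inhabited Atom] : Form Ag Atom := .and (.atom default) (.neg (.atom default))

/-- Membership in the doxastic fragment `L_B` (no knowledge operators). -/
def noK : Form Ag Atom → Prop
  | .atom _  => True
  | .neg φ   => φ.noK
  | .and φ ψ => φ.noK ∧ ψ.noK
  | .B _ φ   => φ.noK
  | .K _ _   => False

/-- φ is an `a`-formula: all variables are local variables of `a` (as given by
`owner`) and all modal operators are `B a` or `K a`. -/
def isAFormula (owner : Atom → Ag) (a : Ag) : Form Ag Atom → Prop
  | .atom p  => owner p = a
  | .neg φ   => φ.isAFormula owner a
  | .and φ ψ => φ.isAFormula owner a ∧ ψ.isAFormula owner a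
  | .B b φ   => b = a ∧ φ.isAFormula owner a
  | .K b φ   => b = a ∧ φ.isAFormula owner a

end Form

/-- φ is (an instance of) a classical propositional tautology: it evaluates to
true under every boolean valuation that respects negation and conjunction
(treating atoms and modal formulas as opaque). -/
def Tautology {Ag Atom : Type} (φ : Form Ag Atom) : Prop :=
  ∀ v : Form Ag Atom → Bool,
    (∀ ψ, v (.neg ψ) = !v ψ) →
    (∀ ψ χ, v (.and ψ χ) = (v ψ && v χ)) →
    v φ = true

/-! ### Doxastic Kripke models -/

/-- A doxastic Kripke model (with set of worlds the type `W`, assumed nonempty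
where required): doxastic accessibility relations `B a` and valuation `V`. -/
structure KModel (Ag Atom W : Type) where
  B : Ag → W → W → Prop
  V : W → Set Atom

section Kripke

variable {Ag Atom W : Type}

/-- Kripke satisfaction `⊨ₖ`; `K a` is interpreted via the equivalence relation
generated by `B a` (i.e. `Relation.EqvGen`, the smallest equivalence relation
containing it). -/
def ksat (M : KModel Ag Atom W) : W → Form Ag Atom → Prop
  | w, .atom p  => p ∈ M.V w
  | w, .neg φ   => ¬ ksat M w φ
  | w, .and φ ψ => ksat M w φ ∧ ksat M w ψ
  | w, .B a φ   => ∀ u, M.B a w u → ksat M u φ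
  | w, .K a φ   => ∀ u, Relation.EqvGen (M.B a) w u → ksat M u φ

def KModel.Serial (M : KModel Ag Atom W) : Prop := ∀ (a : Ag) (w : W), ∃ u, M.B a w u

def KModel.Transit (M : KModel Ag Atom W) : Prop :=
  ∀ (a : Ag) (u v w : W), M.B a u v → M.B a v w → M.B a u w

def KModel.Eucl (M : KModel Ag Atom W) : Prop :=
  ∀ (a : Ag) (u v w : W), M.B a u v → M.B a u w → M.B a v w

/-- Locality: worlds related by `B a ∪ (B a)⁻¹` agree on the local variables of `a`. -/
def KModel.Local (owner : Atom → Ag) (M : KModel Ag Atom W) : Prop :=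
  ∀ (a : Ag) (u v : W), (M.B a u v ∨ M.B a v u) →
    M.V u ∩ {p | owner p = a} = M.V v ∩ {p | owner p = a}

/-- Properness: distinct worlds are distinguished by some agent. -/
def KModel.Proper (M : KModel Ag Atom W) : Prop :=
  ∀ u v : W, u ≠ v → ∃ a : Ag, ¬ Relation.EqvGen (M.B a) u v

end Kripke

/-! ### The Hilbert systems EDL, LocK45 and LocKD45 -/

section ProofSystems

variable {Ag Atom : Type}

/-- Provability in the Hilbert system EDL. -/
inductive EDLProv (owner : Atom → Ag) : Form Ag Atom → Prop
  | taut {φ : Form Ag Atom} : Tautology φ → EDLProv owner φ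
  | axKB (a : Ag) (φ ψ : Form Ag Atom) :
      EDLProv owner ((Form.B a (φ.imp ψ)).imp ((Form.B a φ).imp (Form.B a ψ)))
  | axDB (a : Ag) (φ : Form Ag Atom) :
      EDLProv owner (Form.neg (Form.B a (Form.and φ (Form.neg φ))))
  | ax4B (a : Ag) (φ : Form Ag Atom) :
      EDLProv owner ((Form.B a φ).imp (Form.B a (Form.B a φ)))
  | ax5B (a : Ag) (φ : Form Ag Atom) :
      EDLProv owner ((Form.neg (Form.B a φ)).imp (Form.B a (Form.neg (Form.B a φ))))
  | axKK (a : Ag) (φ ψ : Form Ag Atom) :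
      EDLProv owner ((Form.K a (φ.imp ψ)).imp ((Form.K a φ).imp (Form.K a ψ)))
  | axTK (a : Ag) (φ : Form Ag Atom) :
      EDLProv owner ((Form.K a φ).imp φ)
  | ax4K (a : Ag) (φ : Form Ag Atom) :
      EDLProv owner ((Form.K a φ).imp (Form.K a (Form.K a φ)))
  | ax5K (a : Ag) (φ : Form Ag Atom) :
      EDLProv owner ((Form.neg (Form.K a φ)).imp (Form.K a (Form.neg (Form.K a φ))))
  | axPI (a : Ag) (φ : Form Ag Atom) :
      EDLProv owner ((Form.B a φ).imp (Form.K a (Form.B a φ)))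
  | axNI (a : Ag) (φ : Form Ag Atom) :
      EDLProv owner ((Form.neg (Form.B a φ)).imp (Form.K a (Form.neg (Form.B a φ))))
  | axKIB (a : Ag) (φ : Form Ag Atom) :
      EDLProv owner ((Form.K a φ).imp (Form.B a φ))
  | axLoc (a : Ag) (p : Atom) (h : owner p = a) :
      EDLProv owner (Form.and ((Form.atom p).imp (Form.B a (Form.atom p)))
        ((Form.neg (Form.atom p)).imp (Form.B a (Form.neg (Form.atom p)))))
  | mp {φ ψ : Form Ag Atom} :
      EDLProv owner (φ.imp ψ) → EDLProv owner φ → EDLProv owner ψ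
  | nec (a : Ag) {φ : Form Ag Atom} : EDLProv owner φ → EDLProv owner (Form.K a φ)

/-- Provability in the Hilbert systems over the doxastic fragment `L_B`:
`BProv owner true` is LocKD45 (with axiom D_B) and `BProv owner false` is
LocK45 (without D_B). -/
inductive BProv (owner : Atom → Ag) (withD : Bool) : Form Ag Atom → Prop
  | taut {φ : Form Ag Atom} : φ.noK → Tautology φ → BProv owner withD φ
  | axKB (a : Ag) {φ ψ : Form Ag Atom} (hφ : φ.noK) (hψ : ψ.noK) :
      BProv owner withD ((Form.B a (φ.imp ψ)).imp ((Form.B a φ).imp (Form.B a ψ)))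
  | axDB (a : Ag) {φ : Form Ag Atom} (hD : withD = true) (hφ : φ.noK) :
      BProv owner withD (Form.neg (Form.B a (Form.and φ (Form.neg φ))))
  | ax4B (a : Ag) {φ : Form Ag Atom} (hφ : φ.noK) :
      BProv owner withD ((Form.B a φ).imp (Form.B a (Form.B a φ)))
  | ax5B (a : Ag) {φ : Form Ag Atom} (hφ : φ.noK) :
      BProv owner withD ((Form.neg (Form.B a φ)).imp (Form.B a (Form.neg (Form.B a φ))))
  | axLoc (a : Ag) (p : Atom) (h : owner p = a) :
      BProv owner withD (Form.and ((Form.atom p).imp (Form.B a (Form.atom p)))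
        ((Form.neg (Form.atom p)).imp (Form.B a (Form.neg (Form.atom p)))))
  | mp {φ ψ : Form Ag Atom} :
      BProv owner withD (φ.imp ψ) → BProv owner withD φ → BProv owner withD ψ
  | nec (a : Ag) {φ : Form Ag Atom} : BProv owner withD φ → BProv owner withD (Form.B a φ)

/-- Conjunction of a finite list of formulas (the empty conjunction is ¬⊥). -/
def conj [Inhabited Atom] : List (Form Ag Atom) → Form Ag Atom
  | []        => Form.neg Form.bot
  | [φ]       => φ
  | φ :: rest => Form.and φ (conj rest)

/-- Γ ⊢ φ in EDL: some finite subset Δ ⊆ Γ has EDL ⊢ (⋀Δ) → φ. -/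
def ProvFrom [Inhabited Atom] (owner : Atom → Ag) (Γ : Set (Form Ag Atom))
    (φ : Form Ag Atom) : Prop :=
  ∃ L : List (Form Ag Atom), (∀ ψ ∈ L, ψ ∈ Γ) ∧ EDLProv owner ((conj L).imp φ)

/-- Γ is EDL-consistent. -/
def EDLConsistent [Inhabited Atom] (owner : Atom → Ag) (Γ : Set (Form Ag Atom)) : Prop :=
  ¬ ProvFrom owner Γ Form.bot

/-- Γ is maximally EDL-consistent. -/
def MaxEDLConsistent [Inhabited Atom] (owner : Atom → Ag) (Γ : Set (Form Ag Atom)) : Prop :=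
  EDLConsistent owner Γ ∧ ∀ Δ : Set (Form Ag Atom), Γ ⊂ Δ → ¬ EDLConsistent owner Δ

end ProofSystems

/-! ### Directed hypergraph models -/

/-- The undirected hyperedge `ē = T(e) ∪ H(e)` induced by a directed hyperedge
`e = (T(e), H(e))`. -/
def ebar {V : Type} (e : Set V × Set V) : Set V := e.1 ∪ e.2

/-- A (directed) hypergraph model: a vertex set, a set of directed hyperedges
(pairs (tail, head)), a coloring and a valuation.  Well-formedness conditions
are stated separately. -/
structure HModel (Ag Atom V : Type) where
  Vset : Set V
  E : Set (Set V × Set V)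
  χ : V → Ag
  ℓ : V → Set Atom

namespace HModel

variable {Ag Atom V : Type}

/-- `(Vset, E)` is a directed hypergraph: the vertex set is nonempty and every
hyperedge consists of a finite tail and a finite head, disjoint from each
other, both made of vertices. -/
def IsHypergraph (M : HModel Ag Atom V) : Prop :=
  M.Vset.Nonempty ∧
    ∀ e ∈ M.E, e.1 ⊆ M.Vset ∧ e.2 ⊆ M.Vset ∧ e.1.Finite ∧ e.2.Finite ∧ Disjoint e.1 e.2

/-- χ is a coloring: distinct vertices of the same hyperedge get distinct colors. -/
def IsChromatic (M : HModel Ag Atom V) : Prop :=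
  ∀ e ∈ M.E, Set.InjOn M.χ (ebar e)

/-- The valuation assigns to an `a`-colored vertex only local variables of `a`. -/
def ValOk (owner : Atom → Ag) (M : HModel Ag Atom V) : Prop :=
  ∀ v ∈ M.Vset, M.ℓ v ⊆ {p | owner p = M.χ v}

/-- M is a (well-formed, chromatic) hypergraph model. -/
def IsModel (owner : Atom → Ag) (M : HModel Ag Atom V) : Prop :=
  M.IsHypergraph ∧ M.IsChromatic ∧ M.ValOk owner

/-- Simplicity: for distinct hyperedges, `ē₁ ⊄ ē₂`. -/
def Simple (M : HModel Ag Atom V) : Prop :=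
  ∀ e₁ ∈ M.E, ∀ e₂ ∈ M.E, e₁ ≠ e₂ → ¬ ebar e₁ ⊆ ebar e₂

/-- n-uniformity: every hyperedge has exactly `n` vertices. -/
def Uniform (M : HModel Ag Atom V) (n : ℕ) : Prop :=
  ∀ e ∈ M.E, (ebar e).ncard = n

/-- Tail-completeness: every vertex lies in the tail of some hyperedge. -/
def TailComplete (M : HModel Ag Atom V) : Prop :=
  ∀ v ∈ M.Vset, ∃ e ∈ M.E, v ∈ e.1

end HModel

section HSemantics

variable {Ag Atom V : Type}

/-- The doxastic accessibility relation `B^G_a` between hyperedges: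
some `a`-colored vertex lies in `ē₁ ∩ T(e₂)`. -/
def Bacc (M : HModel Ag Atom V) (a : Ag) (e₁ e₂ : Set V × Set V) : Prop :=
  ∃ u : V, M.χ u = a ∧ u ∈ ebar e₁ ∧ u ∈ e₂.1

/-- The epistemic accessibility relation `K^G_a` between hyperedges:
some `a`-colored vertex lies in `ē₁ ∩ ē₂`. -/
def Kacc (M : HModel Ag Atom V) (a : Ag) (e₁ e₂ : Set V × Set V) : Prop :=
  ∃ u : V, M.χ u = a ∧ u ∈ ebar e₁ ∧ u ∈ ebar e₂

/-- `ℓ(e) = ⋃_{u ∈ ē} ℓ(u)`. -/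
def elabel (M : HModel Ag Atom V) (e : Set V × Set V) : Set Atom :=
  ⋃ u ∈ ebar e, M.ℓ u

/-- Hypergraph satisfaction `⊨ₕ`. -/
def hsat (M : HModel Ag Atom V) : Set V × Set V → Form Ag Atom → Prop
  | e, .atom p  => p ∈ elabel M e
  | e, .neg φ   => ¬ hsat M e φ
  | e, .and φ ψ => hsat M e φ ∧ hsat M e ψ
  | e, .B a φ   => ∀ e' ∈ M.E, Bacc M a e e' → hsat M e' φ
  | e, .K a φ   => ∀ e' ∈ M.E, Kacc M a e e' → hsat M e' φ

end HSemantics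

end DoxHG

namespace DoxHG

section Canonical

variable {Ag Atom : Type}

/-- `Γ^{B_a} := {φ | B_aφ ∈ Γ}`. -/
def projB (Γ : Set (Form Ag Atom)) (a : Ag) : Set (Form Ag Atom) := {φ | Form.B a φ ∈ Γ}

/-- `Γ^{K_a} := {φ | K_aφ ∈ Γ}`. -/
def projK (Γ : Set (Form Ag Atom)) (a : Ag) : Set (Form Ag Atom) := {φ | Form.K a φ ∈ Γ}

/-- `V_a(Γ) := Γ ∩ Var_a` (as a set of atomic formulas). -/
def Vform (owner : Atom → Ag) (Γ : Set (Form Ag Atom)) (a : Ag) : Set (Form Ag Atom) :=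
  {ψ | ψ ∈ Γ ∧ ∃ p : Atom, owner p = a ∧ ψ = Form.atom p}

/-- `B̂_a(Γ) := {B_aφ | B_aφ ∈ Γ}`. -/
def Bhat (Γ : Set (Form Ag Atom)) (a : Ag) : Set (Form Ag Atom) :=
  {ψ | ψ ∈ Γ ∧ ∃ φ : Form Ag Atom, ψ = Form.B a φ}

/-- `s(Γ,a) := V_a(Γ) ∪ B̂_a(Γ)`. -/
def sSet (owner : Atom → Ag) (Γ : Set (Form Ag Atom)) (a : Ag) : Set (Form Ag Atom) :=
  Vform owner Γ a ∪ Bhat Γ a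

/-- The canonical vertex `s(Γ,a)`, tagged with its color `a`. -/
def cvert (owner : Atom → Ag) (Γ : Set (Form Ag Atom)) (a : Ag) :
    Ag × Set (Form Ag Atom) :=
  (a, sSet owner Γ a)

/-- `T(Γ) := {s(Γ,b) | b ∈ Ag, Γ^{B_b} ⊆ Γ}`. -/
def Tset (owner : Atom → Ag) (Γ : Set (Form Ag Atom)) : Set (Ag × Set (Form Ag Atom)) :=
  {v | ∃ b : Ag, projB Γ b ⊆ Γ ∧ v = cvert owner Γ b}

/-- `H(Γ) := {s(Γ,b) | b ∈ Ag, Γ^{B_b} ⊄ Γ}`. -/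
def Hset (owner : Atom → Ag) (Γ : Set (Form Ag Atom)) : Set (Ag × Set (Form Ag Atom)) :=
  {v | ∃ b : Ag, ¬ projB Γ b ⊆ Γ ∧ v = cvert owner Γ b}

/-- The canonical hyperedge `e_Γ = (T(Γ), H(Γ))`. -/
def cedge (owner : Atom → Ag) (Γ : Set (Form Ag Atom)) :
    Set (Ag × Set (Form Ag Atom)) × Set (Ag × Set (Form Ag Atom)) :=
  (Tset owner Γ, Hset owner Γ)

/-- The canonical hypergraph model `M^c` for EDL. -/
def canonHM [Inhabited Atom] (owner : Atom → Ag) :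
    HModel Ag Atom (Ag × Set (Form Ag Atom)) where
  Vset := {v | ∃ Γ : Set (Form Ag Atom), MaxEDLConsistent owner Γ ∧ ∃ a : Ag, v = cvert owner Γ a}
  E := {e | ∃ Γ : Set (Form Ag Atom), MaxEDLConsistent owner Γ ∧ e = cedge owner Γ}
  χ := Prod.fst
  ℓ := fun v => {p : Atom | Form.atom p ∈ v.2 ∧ owner p = v.1}

end Canonical

end DoxHG

namespace DoxHG

section Machinery

set_option linter.unusedSectionVars false

variable {Ag Atom : Type} [Inhabited Atom] {owner : Atom → Ag}

lemma v_imp (v : Form Ag Atom → Bool) (hn : ∀ ψ, v (.neg ψ) = !v ψ)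
    (ha : ∀ ψ χ, v (.and ψ χ) = (v ψ && v χ)) (φ ψ : Form Ag Atom) :
    v (φ.imp ψ) = (!(v φ) || v ψ) := by
  simp only [Form.imp, Form.or, hn, ha, Bool.not_not]
  cases v φ <;> cases v ψ <;> simp

lemma v_bot (v : Form Ag Atom → Bool) (hn : ∀ ψ, v (.neg ψ) = !v ψ)
    (ha : ∀ ψ χ, v (.and ψ χ) = (v ψ && v χ)) :
    v (Form.bot) = false := by
  simp [Form.bot, hn, ha]

lemma prov_imp_mp {χ φ ψ : Form Ag Atom}
    (h1 : EDLProv owner (χ.imp (φ.imp ψ))) (h2 : EDLProv owner (χ.imp φ)) :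
    EDLProv owner (χ.imp ψ) := by
  have t : EDLProv owner ((χ.imp (φ.imp ψ)).imp ((χ.imp φ).imp (χ.imp ψ))) := .taut (by
    intro v hn ha
    simp only [v_imp v hn ha]
    cases v χ <;> cases v φ <;> cases v ψ <;> simp)
  exact (t.mp h1).mp h2

lemma prov_imp_of {φ ψ : Form Ag Atom} (h : EDLProv owner ψ) :
    EDLProv owner (φ.imp ψ) := by
  have t : EDLProv owner (ψ.imp (φ.imp ψ)) := .taut (by
    intro v hn ha
    simp only [v_imp v hn ha]
    cases v φ <;> cases v ψ <;> simp)
  exact t.mp h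

lemma prov_imp_trans {φ ψ χ : Form Ag Atom}
    (h1 : EDLProv owner (φ.imp ψ)) (h2 : EDLProv owner (ψ.imp χ)) :
    EDLProv owner (φ.imp χ) :=
  prov_imp_mp (prov_imp_of h2) h1

lemma prov_imp_self (φ : Form Ag Atom) : EDLProv owner (φ.imp φ) := .taut (by
  intro v hn ha
  simp only [v_imp v hn ha]
  cases v φ <;> simp)

lemma prov_and_elim_l (φ ψ : Form Ag Atom) :
    EDLProv owner ((φ.and ψ).imp φ) := .taut (by
  intro v hn ha
  simp only [v_imp v hn ha, ha]
  cases v φ <;> cases v ψ <;> simp)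

lemma prov_and_elim_r (φ ψ : Form Ag Atom) :
    EDLProv owner ((φ.and ψ).imp ψ) := .taut (by
  intro v hn ha
  simp only [v_imp v hn ha, ha]
  cases v φ <;> cases v ψ <;> simp)

lemma prov_and_intro (φ ψ : Form Ag Atom) :
    EDLProv owner (φ.imp (ψ.imp (φ.and ψ))) := .taut (by
  intro v hn ha
  simp only [v_imp v hn ha, ha]
  cases v φ <;> cases v ψ <;> simp)

lemma prov_imp_and {χ φ ψ : Form Ag Atom}
    (h1 : EDLProv owner (χ.imp φ)) (h2 : EDLProv owner (χ.imp ψ)) :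
    EDLProv owner (χ.imp (φ.and ψ)) :=
  prov_imp_mp (prov_imp_mp (prov_imp_of (prov_and_intro φ ψ)) h1) h2

lemma prov_neg_bot : EDLProv owner (Form.neg (Form.bot (Ag := Ag) (Atom := Atom))) := .taut (by
  intro v hn ha
  simp [hn, v_bot v hn ha])

lemma conj_cons_eq (φ ψ : Form Ag Atom) (L : List (Form Ag Atom)) :
    conj (φ :: ψ :: L) = Form.and φ (conj (ψ :: L)) := rfl

lemma prov_conj_cons_of_and (φ : Form Ag Atom) (L : List (Form Ag Atom)) :
    EDLProv owner ((φ.and (conj L)).imp (conj (φ :: L))) := by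
  cases L with
  | nil =>
    exact prov_and_elim_l _ _
  | cons ψ rest =>
    rw [conj_cons_eq]
    exact prov_imp_self _

lemma prov_and_of_conj_cons (φ : Form Ag Atom) (L : List (Form Ag Atom)) :
    EDLProv owner ((conj (φ :: L)).imp (φ.and (conj L))) := by
  cases L with
  | nil =>
    show EDLProv owner (φ.imp (φ.and (Form.neg Form.bot)))
    exact prov_imp_and (prov_imp_self φ) (prov_imp_of prov_neg_bot)
  | cons ψ rest =>
    rw [conj_cons_eq]
    exact prov_imp_self _

lemma prov_conj_elim {L : List (Form Ag Atom)} {ψ : Form Ag Atom} (h : ψ ∈ L) :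
    EDLProv owner ((conj L).imp ψ) := by
  induction L with
  | nil => cases h
  | cons φ rest ih =>
    rcases List.mem_cons.mp h with rfl | h'
    · exact prov_imp_trans (prov_and_of_conj_cons _ _) (prov_and_elim_l _ _)
    · exact prov_imp_trans (prov_imp_trans (prov_and_of_conj_cons _ _)
        (prov_and_elim_r _ _)) (ih h')

lemma prov_conj_intro {χ : Form Ag Atom} {L : List (Form Ag Atom)}
    (h : ∀ ψ ∈ L, EDLProv owner (χ.imp ψ)) :
    EDLProv owner (χ.imp (conj L)) := by
  induction L with
  | nil => exact prov_imp_of prov_neg_bot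
  | cons φ rest ih =>
    exact prov_imp_trans
      (prov_imp_and (h φ (List.mem_cons_self)) (ih fun ψ hψ => h ψ (List.mem_cons_of_mem _ hψ)))
      (prov_conj_cons_of_and _ _)

lemma provFrom_of_prov {Γ : Set (Form Ag Atom)} {φ : Form Ag Atom}
    (h : EDLProv owner φ) : ProvFrom owner Γ φ :=
  ⟨[], by simp, prov_imp_of h⟩

lemma provFrom_of_mem {Γ : Set (Form Ag Atom)} {φ : Form Ag Atom}
    (h : φ ∈ Γ) : ProvFrom owner Γ φ :=
  ⟨[φ], by simpa using h, prov_imp_self φ⟩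

lemma provFrom_mp {Γ : Set (Form Ag Atom)} {φ ψ : Form Ag Atom}
    (h1 : ProvFrom owner Γ (φ.imp ψ)) (h2 : ProvFrom owner Γ φ) :
    ProvFrom owner Γ ψ := by
  obtain ⟨L1, hL1, hp1⟩ := h1
  obtain ⟨L2, hL2, hp2⟩ := h2
  refine ⟨L1 ++ L2, ?_, ?_⟩
  · intro χ hχ
    rcases List.mem_append.mp hχ with h | h
    · exact hL1 χ h
    · exact hL2 χ h
  · have c1 : EDLProv owner ((conj (L1 ++ L2)).imp (conj L1)) :=
      prov_conj_intro fun χ hχ => prov_conj_elim (List.mem_append.mpr (Or.inl hχ))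
    have c2 : EDLProv owner ((conj (L1 ++ L2)).imp (conj L2)) :=
      prov_conj_intro fun χ hχ => prov_conj_elim (List.mem_append.mpr (Or.inr hχ))
    exact prov_imp_mp (prov_imp_trans c1 hp1) (prov_imp_trans c2 hp2)

section MCS

variable {Γ : Set (Form Ag Atom)} (hΓ : MaxEDLConsistent owner Γ)

include hΓ

lemma provFrom_neg_of_not_mem {φ : Form Ag Atom} (h : φ ∉ Γ) :
    ProvFrom owner Γ (Form.neg φ) := by
  classical
  have hss : Γ ⊂ insert φ Γ := Set.ssubset_insert h
  have hin := hΓ.2 _ hss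
  rw [EDLConsistent, not_not] at hin
  obtain ⟨L, hL, hp⟩ := hin
  refine ⟨L.filter (fun ψ => ψ ≠ φ), ?_, ?_⟩
  · intro ψ hψ
    rw [List.mem_filter] at hψ
    have h1 := hL ψ hψ.1
    have h2 : ψ ≠ φ := by simpa using hψ.2
    rcases h1 with h1 | h1
    · exact absurd h1 h2
    · exact h1
  · set L' := L.filter (fun ψ => ψ ≠ φ) with hL'
    have key : EDLProv owner ((φ.and (conj L')).imp (conj L)) := by
      refine prov_conj_intro fun ψ hψ => ?_
      by_cases hcase : ψ = φ
      · subst hcase; exact prov_and_elim_l _ _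
      · refine prov_imp_trans (prov_and_elim_r _ _) (prov_conj_elim ?_)
        rw [hL', List.mem_filter]
        exact ⟨hψ, by simpa using hcase⟩
    have hbot : EDLProv owner ((φ.and (conj L')).imp Form.bot) :=
      prov_imp_trans key hp
    have t : EDLProv owner (((φ.and (conj L')).imp Form.bot).imp ((conj L').imp (Form.neg φ))) :=
      .taut (by
        intro v hn ha
        simp only [v_imp v hn ha, ha, hn, v_bot v hn ha]
        cases v φ <;> cases v (conj L') <;> simp)
    exact t.mp hbot

lemma mcs_mem_of_provFrom {φ : Form Ag Atom} (h : ProvFrom owner Γ φ) : φ ∈ Γ := by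
  by_contra hne
  have hneg := provFrom_neg_of_not_mem hΓ hne
  have t : EDLProv owner (φ.imp ((Form.neg φ).imp Form.bot)) := .taut (by
    intro v hn ha
    simp only [v_imp v hn ha, hn, v_bot v hn ha]
    cases v φ <;> simp)
  exact hΓ.1 (provFrom_mp (provFrom_mp (provFrom_of_prov t) h) hneg)

lemma mcs_thm {φ : Form Ag Atom} (h : EDLProv owner φ) : φ ∈ Γ :=
  mcs_mem_of_provFrom hΓ (provFrom_of_prov h)

lemma mcs_mp {φ ψ : Form Ag Atom} (h1 : φ.imp ψ ∈ Γ) (h2 : φ ∈ Γ) : ψ ∈ Γ :=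
  mcs_mem_of_provFrom hΓ (provFrom_mp (provFrom_of_mem h1) (provFrom_of_mem h2))

lemma mcs_neg_mem {φ : Form Ag Atom} (h : φ ∉ Γ) : Form.neg φ ∈ Γ :=
  mcs_mem_of_provFrom hΓ (provFrom_neg_of_not_mem hΓ h)

lemma mcs_not_both {φ : Form Ag Atom} (h1 : φ ∈ Γ) (h2 : Form.neg φ ∈ Γ) : False := by
  have t : EDLProv owner (φ.imp ((Form.neg φ).imp Form.bot)) := .taut (by
    intro v hn ha
    simp only [v_imp v hn ha, hn, v_bot v hn ha]
    cases v φ <;> simp)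
  exact hΓ.1 (provFrom_mp (provFrom_mp (provFrom_of_prov t) (provFrom_of_mem h1))
    (provFrom_of_mem h2))

lemma mcs_not_mem_of_neg_mem {φ : Form Ag Atom} (h : Form.neg φ ∈ Γ) : φ ∉ Γ :=
  fun hmem => mcs_not_both hΓ hmem h

end MCS

lemma nec_B (a : Ag) {φ : Form Ag Atom} (h : EDLProv owner φ) :
    EDLProv owner (Form.B a φ) :=
  (EDLProv.axKIB a φ).mp (EDLProv.nec a h)

section MCS2

variable {Γ : Set (Form Ag Atom)} (hΓ : MaxEDLConsistent owner Γ)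

include hΓ

lemma mcs_B_mono {a : Ag} {φ ψ : Form Ag Atom} (h : EDLProv owner (φ.imp ψ))
    (hb : Form.B a φ ∈ Γ) : Form.B a ψ ∈ Γ :=
  mcs_mp hΓ (mcs_mp hΓ (mcs_thm hΓ (EDLProv.axKB a φ ψ)) (mcs_thm hΓ (nec_B a h))) hb

lemma mcs_B_and {a : Ag} {φ ψ : Form Ag Atom} (h1 : Form.B a φ ∈ Γ)
    (h2 : Form.B a ψ ∈ Γ) : Form.B a (φ.and ψ) ∈ Γ := by
  have s1 : Form.B a (ψ.imp (φ.and ψ)) ∈ Γ :=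
    mcs_mp hΓ (mcs_mp hΓ (mcs_thm hΓ (EDLProv.axKB a φ (ψ.imp (φ.and ψ))))
      (mcs_thm hΓ (nec_B a (prov_and_intro φ ψ)))) h1
  exact mcs_mp hΓ (mcs_mp hΓ (mcs_thm hΓ (EDLProv.axKB a ψ (φ.and ψ))) s1) h2

lemma mcs_loc_B_of_mem {a : Ag} {p : Atom} (hpa : owner p = a)
    (h : Form.atom p ∈ Γ) : Form.B a (Form.atom p) ∈ Γ := by
  have hl := mcs_thm hΓ (EDLProv.axLoc a p hpa)
  exact mcs_mp hΓ (mcs_mp hΓ (mcs_thm hΓ (prov_and_elim_l _ _)) hl) h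

lemma mcs_loc_Bneg_of_not_mem {a : Ag} {p : Atom} (hpa : owner p = a)
    (h : Form.atom p ∉ Γ) : Form.B a (Form.neg (Form.atom p)) ∈ Γ := by
  have hl := mcs_thm hΓ (EDLProv.axLoc a p hpa)
  exact mcs_mp hΓ (mcs_mp hΓ (mcs_thm hΓ (prov_and_elim_r _ _)) hl) (mcs_neg_mem hΓ h)

lemma mcs_mem_of_loc_B {a : Ag} {p : Atom} (hpa : owner p = a)
    (h : Form.B a (Form.atom p) ∈ Γ) : Form.atom p ∈ Γ := by
  by_contra hne
  have h2 := mcs_loc_Bneg_of_not_mem hΓ hpa hne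
  have h3 := mcs_B_and hΓ h h2
  exact mcs_not_both hΓ h3 (mcs_thm hΓ (EDLProv.axDB a (Form.atom p)))

lemma mcs_not_mem_of_loc_Bneg {a : Ag} {p : Atom} (hpa : owner p = a)
    (h : Form.B a (Form.neg (Form.atom p)) ∈ Γ) : Form.atom p ∉ Γ := by
  intro hmem
  have h1 := mcs_loc_B_of_mem hΓ hpa hmem
  have h3 := mcs_B_and hΓ h1 h
  exact mcs_not_both hΓ h3 (mcs_thm hΓ (EDLProv.axDB a (Form.atom p)))

lemma mcs_B_conj {a : Ag} {L : List (Form Ag Atom)}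
    (h : ∀ ψ ∈ L, Form.B a ψ ∈ Γ) : Form.B a (conj L) ∈ Γ := by
  induction L with
  | nil => exact mcs_thm hΓ (nec_B a prov_neg_bot)
  | cons φ rest ih =>
    have h1 : Form.B a (φ.and (conj rest)) ∈ Γ :=
      mcs_B_and hΓ (h φ (List.mem_cons_self))
        (ih fun ψ hψ => h ψ (List.mem_cons_of_mem _ hψ))
    exact mcs_B_mono hΓ (prov_conj_cons_of_and _ _) h1

lemma projB_consistent (a : Ag) : EDLConsistent owner (projB Γ a) := by
  rintro ⟨L, hL, hp⟩
  have hBL : Form.B a (conj L) ∈ Γ := mcs_B_conj hΓ fun ψ hψ => hL ψ hψ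
  have hBbot : Form.B a (Form.bot) ∈ Γ :=
    mcs_B_mono hΓ hp hBL
  have hD : Form.neg (Form.B a (Form.bot (Ag := Ag) (Atom := Atom))) ∈ Γ :=
    mcs_thm hΓ (EDLProv.axDB a (Form.atom default))
  exact mcs_not_both hΓ hBbot hD

end MCS2

lemma lindenbaum {S : Set (Form Ag Atom)} (h : EDLConsistent owner S) :
    ∃ Γ : Set (Form Ag Atom), S ⊆ Γ ∧ MaxEDLConsistent owner Γ := by
  have hz := zorn_subset_nonempty {T : Set (Form Ag Atom) | EDLConsistent owner T} ?_ S h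
  · obtain ⟨m, hSm, hmax⟩ := hz
    exact ⟨m, hSm, hmax.1, fun Δ hΔ hΔc => hΔ.not_subset (hmax.2 hΔc hΔ.subset)⟩
  · intro c hc hchain hne
    refine ⟨⋃₀ c, ?_, fun s hs => Set.subset_sUnion_of_mem hs⟩
    rintro ⟨L, hL, hp⟩
    have key : ∃ T ∈ c, ∀ ψ ∈ L, ψ ∈ T := by
      clear hp
      induction L with
      | nil => obtain ⟨T, hT⟩ := hne; exact ⟨T, hT, by simp⟩
      | cons φ rest ih =>
        obtain ⟨T, hT, hTr⟩ := ih (fun ψ hψ => hL ψ (List.mem_cons_of_mem _ hψ))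
        obtain ⟨T', hT', hφ⟩ := hL φ (List.mem_cons_self)
        rcases hchain.total hT hT' with hsub | hsub
        · exact ⟨T', hT', fun ψ hψ => by
            rcases List.mem_cons.mp hψ with rfl | h'
            · exact hφ
            · exact hsub (hTr ψ h')⟩
        · exact ⟨T, hT, fun ψ hψ => by
            rcases List.mem_cons.mp hψ with rfl | h'
            · exact hsub hφ
            · exact hTr ψ h'⟩
    obtain ⟨T, hTc, hT⟩ := key
    exact (hc hTc) ⟨L, hT, hp⟩

end Machinery

end DoxHG

namespace DoxHG

section Main

set_option linter.unusedSectionVars false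

variable {Ag Atom : Type} [Inhabited Atom] {owner : Atom → Ag}

variable {Γ Δ : Set (Form Ag Atom)} {a : Ag}

lemma mem_sSet_atom {p : Atom} (hpa : owner p = a) :
    Form.atom p ∈ sSet owner Γ a ↔ Form.atom p ∈ Γ := by
  constructor
  · rintro (⟨hm, q, hq, heq⟩ | ⟨hm, φ, heq⟩)
    · exact hm
    · cases heq
  · intro h
    exact Or.inl ⟨h, p, hpa, rfl⟩

lemma mem_sSet_B {φ : Form Ag Atom} :
    Form.B a φ ∈ sSet owner Γ a ↔ Form.B a φ ∈ Γ := by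
  constructor
  · rintro (⟨hm, q, hq, heq⟩ | ⟨hm, ψ, heq⟩)
    · cases heq
    · exact hm
  · intro h
    exact Or.inr ⟨h, φ, rfl⟩

lemma sSet_eq_of_agree
    (hatoms : ∀ p : Atom, owner p = a → (Form.atom p ∈ Γ ↔ Form.atom p ∈ Δ))
    (hB : ∀ φ : Form Ag Atom, Form.B a φ ∈ Γ ↔ Form.B a φ ∈ Δ) :
    sSet owner Γ a = sSet owner Δ a := by
  ext ψ
  constructor
  · rintro (⟨hm, q, hq, rfl⟩ | ⟨hm, φ, rfl⟩)
    · exact Or.inl ⟨(hatoms q hq).mp hm, q, hq, rfl⟩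
    · exact Or.inr ⟨(hB φ).mp hm, φ, rfl⟩
  · rintro (⟨hm, q, hq, rfl⟩ | ⟨hm, φ, rfl⟩)
    · exact Or.inl ⟨(hatoms q hq).mpr hm, q, hq, rfl⟩
    · exact Or.inr ⟨(hB φ).mpr hm, φ, rfl⟩

lemma atom_agree_of_sSet_eq (h : sSet owner Γ a = sSet owner Δ a)
    {p : Atom} (hpa : owner p = a) :
    Form.atom p ∈ Γ ↔ Form.atom p ∈ Δ := by
  rw [← mem_sSet_atom hpa, ← mem_sSet_atom (Γ := Δ) hpa, h]

lemma B_agree_of_sSet_eq (h : sSet owner Γ a = sSet owner Δ a)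
    (φ : Form Ag Atom) : Form.B a φ ∈ Γ ↔ Form.B a φ ∈ Δ := by
  rw [← mem_sSet_B, ← mem_sSet_B (Γ := Δ), h]

/-- From `Γ^{B_a} ⊆ Δ` we get agreement on the `a`-view and `Δ^{B_a} ⊆ Δ`. -/
lemma consequences_of_projB_subset (hΓ : MaxEDLConsistent owner Γ)
    (hΔ : MaxEDLConsistent owner Δ) (h : projB Γ a ⊆ Δ) :
    sSet owner Γ a = sSet owner Δ a ∧ projB Δ a ⊆ Δ := by
  have hB : ∀ φ : Form Ag Atom, Form.B a φ ∈ Γ ↔ Form.B a φ ∈ Δ := by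
    intro φ
    constructor
    · intro hm
      exact h (mcs_mp hΓ (mcs_thm hΓ (EDLProv.ax4B a φ)) hm : Form.B a (Form.B a φ) ∈ Γ)
    · intro hm
      by_contra hne
      have h1 : Form.B a (Form.neg (Form.B a φ)) ∈ Γ :=
        mcs_mp hΓ (mcs_thm hΓ (EDLProv.ax5B a φ)) (mcs_neg_mem hΓ hne)
      exact mcs_not_both hΔ hm (h h1)
  have hatoms : ∀ p : Atom, owner p = a → (Form.atom p ∈ Γ ↔ Form.atom p ∈ Δ) := by
    intro p hpa
    constructor
    · intro hm
      exact h (mcs_loc_B_of_mem hΓ hpa hm)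
    · intro hm
      by_contra hne
      exact mcs_not_both hΔ hm (h (mcs_loc_Bneg_of_not_mem hΓ hpa hne))
  refine ⟨sSet_eq_of_agree hatoms hB, fun φ hφ => ?_⟩
  exact h ((hB φ).mpr hφ)

lemma projB_subset_of (hΓ : MaxEDLConsistent owner Γ) (hΔ : MaxEDLConsistent owner Δ)
    (hs : sSet owner Γ a = sSet owner Δ a) (hself : projB Δ a ⊆ Δ) :
    projB Γ a ⊆ Δ := by
  intro φ hφ
  exact hself ((B_agree_of_sSet_eq hs φ).mp hφ)

lemma sSet_eq_of_projK_subset (hΓ : MaxEDLConsistent owner Γ)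
    (hΔ : MaxEDLConsistent owner Δ) (h : projK Γ a ⊆ Δ) :
    sSet owner Γ a = sSet owner Δ a := by
  have hB : ∀ φ : Form Ag Atom, Form.B a φ ∈ Γ ↔ Form.B a φ ∈ Δ := by
    intro φ
    constructor
    · intro hm
      exact h (mcs_mp hΓ (mcs_thm hΓ (EDLProv.axPI a φ)) hm : Form.K a (Form.B a φ) ∈ Γ)
    · intro hm
      by_contra hne
      have h1 : Form.K a (Form.neg (Form.B a φ)) ∈ Γ :=
        mcs_mp hΓ (mcs_thm hΓ (EDLProv.axNI a φ)) (mcs_neg_mem hΓ hne)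
      exact mcs_not_both hΔ hm (h h1)
  have hatoms : ∀ p : Atom, owner p = a → (Form.atom p ∈ Γ ↔ Form.atom p ∈ Δ) := by
    intro p hpa
    constructor
    · intro hm
      exact mcs_mem_of_loc_B hΔ hpa ((hB (Form.atom p)).mp (mcs_loc_B_of_mem hΓ hpa hm))
    · intro hm
      by_contra hne
      have h1 : Form.B a (Form.neg (Form.atom p)) ∈ Δ :=
        (hB _).mp (mcs_loc_Bneg_of_not_mem hΓ hpa hne)
      exact mcs_not_mem_of_loc_Bneg hΔ hpa h1 hm
  exact sSet_eq_of_agree hatoms hB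

lemma projK_subset_of_sSet_eq (hΓ : MaxEDLConsistent owner Γ)
    (hΔ : MaxEDLConsistent owner Δ) (hs : sSet owner Γ a = sSet owner Δ a) :
    projK Γ a ⊆ Δ := by
  have hB := B_agree_of_sSet_eq hs
  obtain ⟨Θ, hΘsub, hΘ⟩ := lindenbaum (projB_consistent hΓ a)
  intro φ hφ
  -- hφ : K a φ ∈ Γ
  have hKΘ : Form.K a φ ∈ Θ := by
    have h1 : Form.K a (Form.K a φ) ∈ Γ := mcs_mp hΓ (mcs_thm hΓ (EDLProv.ax4K a φ)) hφ
    have h2 : Form.B a (Form.K a φ) ∈ Γ :=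
      mcs_mp hΓ (mcs_thm hΓ (EDLProv.axKIB a (Form.K a φ))) h1
    exact hΘsub h2
  by_contra hne
  have hnφ : Form.neg φ ∈ Δ := mcs_neg_mem hΔ hne
  have hnK : Form.K a φ ∉ Δ := by
    intro hK
    exact mcs_not_both hΔ (mcs_mp hΔ (mcs_thm hΔ (EDLProv.axTK a φ)) hK) hnφ
  have h3 : Form.K a (Form.neg (Form.K a φ)) ∈ Δ :=
    mcs_mp hΔ (mcs_thm hΔ (EDLProv.ax5K a φ)) (mcs_neg_mem hΔ hnK)
  have h4 : Form.B a (Form.neg (Form.K a φ)) ∈ Δ :=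
    mcs_mp hΔ (mcs_thm hΔ (EDLProv.axKIB a _)) h3
  have h5 : Form.B a (Form.neg (Form.K a φ)) ∈ Γ := (hB _).mpr h4
  exact mcs_not_both hΘ hKΘ (hΘsub h5)

/- canonical model structural lemmas -/

lemma cvert_mem_ebar (Γ : Set (Form Ag Atom)) (b : Ag) :
    cvert owner Γ b ∈ ebar (cedge owner Γ) := by
  by_cases hb : projB Γ b ⊆ Γ
  · exact Or.inl ⟨b, hb, rfl⟩
  · exact Or.inr ⟨b, hb, rfl⟩

lemma eq_cvert_of_mem_ebar {u : Ag × Set (Form Ag Atom)}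
    (h : u ∈ ebar (cedge owner Γ)) (hu : u.1 = a) : u = cvert owner Γ a := by
  rcases h with ⟨b, _, rfl⟩ | ⟨b, _, rfl⟩ <;>
    · cases hu; rfl

lemma cvert_eq_iff : cvert owner Γ a = cvert owner Δ a ↔ sSet owner Γ a = sSet owner Δ a := by
  constructor
  · intro h
    exact congrArg Prod.snd h
  · intro h
    simp [cvert, h]

lemma Kacc_iff_sSet_eq :
    Kacc (canonHM owner) a (cedge owner Γ) (cedge owner Δ) ↔
      sSet owner Γ a = sSet owner Δ a := by
  constructor
  · rintro ⟨u, hχ, h1, h2⟩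
    have e1 : u = cvert owner Γ a := eq_cvert_of_mem_ebar h1 hχ
    have e2 : u = cvert owner Δ a := eq_cvert_of_mem_ebar h2 hχ
    exact cvert_eq_iff.mp (e1 ▸ e2)
  · intro h
    refine ⟨cvert owner Γ a, rfl, cvert_mem_ebar Γ a, ?_⟩
    rw [show cvert owner Γ a = cvert owner Δ a from cvert_eq_iff.mpr h]
    exact cvert_mem_ebar Δ a

lemma Bacc_iff :
    Bacc (canonHM owner) a (cedge owner Γ) (cedge owner Δ) ↔
      (sSet owner Γ a = sSet owner Δ a ∧ projB Δ a ⊆ Δ) := by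
  constructor
  · rintro ⟨u, hχ, h1, h2⟩
    have e1 : u = cvert owner Γ a := eq_cvert_of_mem_ebar h1 hχ
    obtain ⟨b, hb, heq⟩ := h2
    have hba : b = a := by
      have hub : u.1 = b := by rw [heq]; rfl
      rw [← hub]
      exact hχ
    subst hba
    refine ⟨cvert_eq_iff.mp (e1 ▸ heq), hb⟩
  · rintro ⟨hs, hself⟩
    refine ⟨cvert owner Γ a, rfl, cvert_mem_ebar Γ a, ?_⟩
    exact ⟨a, hself, cvert_eq_iff.mpr hs⟩

end Main

end DoxHG

namespace DoxHG

/-- In the canonical hypergraph model for EDL, for maximally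
EDL-consistent sets Γ, Δ and an agent `a`:
(i) `e_Γ B^{G^c}_a e_Δ` iff `Γ^{B_a} ⊆ Δ`;
(ii) `e_Γ K^{G^c}_a e_Δ` iff `Γ^{K_a} ⊆ Δ`. -/
theorem statement_9 {Ag Atom : Type} [Fintype Ag] [Nonempty Ag] [Countable Atom] [Inhabited Atom]
    (owner : Atom → Ag) (Γ Δ : Set (Form Ag Atom))
    (hΓ : MaxEDLConsistent owner Γ) (hΔ : MaxEDLConsistent owner Δ) (a : Ag) :
    (Bacc (canonHM owner) a (cedge owner Γ) (cedge owner Δ) ↔ projB Γ a ⊆ Δ) ∧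
    (Kacc (canonHM owner) a (cedge owner Γ) (cedge owner Δ) ↔ projK Γ a ⊆ Δ) := by
  constructor
  · rw [Bacc_iff]
    constructor
    · rintro ⟨hs, hself⟩
      exact projB_subset_of hΓ hΔ hs hself
    · intro h
      exact consequences_of_projB_subset hΓ hΔ h
  · rw [Kacc_iff_sSet_eq]
    constructor
    · intro hs
      exact projK_subset_of_sSet_eq hΓ hΔ hs
    · intro h
      exact sSet_eq_of_projK_subset hΓ hΔ h

end DoxHG
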